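/- arXiv:1908.11123 — 4 statements merged into one kernel-verified Lean document; each statement's English description precedes it below -/
import Mathlib

section
/- Let n ≥ 1 and let X be a nonempty finite set. For each x ∈ X let M^x be a complex n×n matrix with 0 ≼ M^x ≼ 𝟙. Then the following are equivalent: (i) there exist a function E_C : X → ℝ and a function E_Q defined on density matrices with real values such that Tr(M^x ρ) = E_C(x) · E_Q(ρ) for every x ∈ X and every density matrix ρ; (ii) there exist a function f : X → ℝ with 0 ≤ f(x) ≤ 1 for all x and a positive semidefinite matrix Q with Q ≼ 𝟙 such that M^x = f(x) • Q for every x ∈ X. (This is the equivalence of the efficiency-factorization and POVM-factorization formulations of the fair sampling assumption.) -/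
open scoped ComplexOrder

open Matrix in
/-- A complex matrix is determined by its quadratic form. -/
lemma aux_quad_ext {n : ℕ} (A B : Matrix (Fin n) (Fin n) ℂ)
    (h : ∀ v : Fin n → ℂ, star v ⬝ᵥ (A *ᵥ v) = star v ⬝ᵥ (B *ᵥ v)) : A = B := by
  have hC : ∀ v : Fin n → ℂ, star v ⬝ᵥ ((A - B) *ᵥ v) = 0 := by
    intro v
    rw [sub_mulVec, dotProduct_sub, h v, sub_self]
  have hT : Matrix.toEuclideanLin (A - B) = 0 := by
    rw [← inner_map_self_eq_zero]
    intro x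
    have := hC ((WithLp.equiv 2 (Fin n → ℂ)) x)
    rw [Matrix.toEuclideanLin_apply, PiLp.inner_apply]
    simp only [PiLp.toLp_apply, RCLike.inner_apply]
    have h2 : (starRingEnd ℂ) (star ((WithLp.equiv 2 (Fin n → ℂ)) x) ⬝ᵥ
        ((A - B) *ᵥ (WithLp.equiv 2 (Fin n → ℂ)) x)) = 0 := by rw [this]; simp
    rw [← h2]
    simp [dotProduct, Finset.sum_comm, map_sum, mul_comm]
  exact sub_eq_zero.mp (Matrix.toEuclideanLin.injective
    (by simpa using hT : Matrix.toEuclideanLin (A - B) = Matrix.toEuclideanLin 0))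

open Matrix in
lemma aux_outer_psd {n : ℕ} (v : Fin n → ℂ) :
    (Matrix.vecMulVec v (star v)).PosSemidef := by
  have := Matrix.posSemidef_conjTranspose_mul_self (Matrix.replicateRow Unit (star v))
  rwa [Matrix.conjTranspose_replicateRow, star_star, ← Matrix.vecMulVec_eq] at this

open Matrix in
lemma aux_trace_outer {n : ℕ} (A : Matrix (Fin n) (Fin n) ℂ) (v : Fin n → ℂ) :
    (A * Matrix.vecMulVec v (star v)).trace = star v ⬝ᵥ (A *ᵥ v) := by
  simp only [Matrix.trace, Matrix.diag, Matrix.mul_apply, Matrix.vecMulVec_apply,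
    dotProduct, Matrix.mulVec, Pi.star_apply, Finset.mul_sum]
  exact Finset.sum_congr rfl fun i _ => Finset.sum_congr rfl fun j _ => by ring

open Matrix in
lemma aux_trace_outer_self {n : ℕ} (v : Fin n → ℂ) :
    (Matrix.vecMulVec v (star v)).trace = star v ⬝ᵥ v := by
  simp [Matrix.trace, Matrix.diag, Matrix.vecMulVec_apply, dotProduct, mul_comm]

open Matrix in
lemma aux_psd_smul {n : ℕ} {A : Matrix (Fin n) (Fin n) ℂ} (hA : A.PosSemidef)
    {c : ℂ} (hc : 0 ≤ c) : (c • A).PosSemidef := by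
  have hcs : star c = c := by
    rw [Complex.star_def, Complex.conj_eq_iff_im]
    exact (Complex.nonneg_iff.mp hc).2.symm
  refine Matrix.PosSemidef.of_dotProduct_mulVec_nonneg ?_ fun w => ?_
  · rw [Matrix.IsHermitian, Matrix.conjTranspose_smul, hA.1.eq, hcs]
  · rw [Matrix.smul_mulVec, dotProduct_smul, smul_eq_mul]
    exact mul_nonneg hc (hA.dotProduct_mulVec_nonneg w)

open Matrix in
lemma aux_trace_nonneg {n : ℕ} {P : Matrix (Fin n) (Fin n) ℂ} (hP : P.PosSemidef) :
    0 ≤ P.trace := by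
  refine Finset.sum_nonneg fun i _ => ?_
  have := hP.dotProduct_mulVec_nonneg (Pi.single i 1)
  simpa [dotProduct, Matrix.mulVec, Pi.single_apply] using this

open scoped MatrixOrder Matrix in
lemma aux_sqrt {n : ℕ} {ρ : Matrix (Fin n) (Fin n) ℂ} (hρ : ρ.PosSemidef) :
    ∃ S : Matrix (Fin n) (Fin n) ℂ, Sᴴ = S ∧ S * S = ρ :=
  ⟨CFC.sqrt ρ, (Matrix.nonneg_iff_posSemidef.mp (CFC.sqrt_nonneg ρ)).1.eq, CFC.sqrt_mul_sqrt_self ρ hρ.nonneg⟩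

open Matrix

/-- Equivalence of the efficiency-factorization and the POVM-factorization
formulations of the fair sampling assumption. For POVM elements `0 ≼ M^x ≼ 𝟙`, the efficiency
`Tr(M^x ρ)` factorizes as `E_C(x)·E_Q(ρ)` over all density matrices `ρ` iff there are
`f : X → [0,1]` and a positive semidefinite `Q ≼ 𝟙` with `M^x = f(x) • Q` for every `x`. -/
theorem fair_sampling_efficiency_iff_povm_factorization
    (n : ℕ) (hn : 1 ≤ n) (X : Type*) [Fintype X] [Nonempty X]
    (M : X → Matrix (Fin n) (Fin n) ℂ)
    (hM0 : ∀ x, (M x).PosSemidef)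
    (hM1 : ∀ x, ((1 : Matrix (Fin n) (Fin n) ℂ) - M x).PosSemidef) :
    (∃ (EC : X → ℝ) (EQ : Matrix (Fin n) (Fin n) ℂ → ℝ),
        ∀ (x : X) (ρ : Matrix (Fin n) (Fin n) ℂ), ρ.PosSemidef → ρ.trace = 1 →
          Matrix.trace (M x * ρ) = ((EC x * EQ ρ : ℝ) : ℂ)) ↔
    (∃ (f : X → ℝ) (Q : Matrix (Fin n) (Fin n) ℂ),
        (∀ x, 0 ≤ f x) ∧ (∀ x, f x ≤ 1) ∧
        Q.PosSemidef ∧ ((1 : Matrix (Fin n) (Fin n) ℂ) - Q).PosSemidef ∧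
        ∀ x, M x = (f x : ℂ) • Q) := by
  constructor
  · rintro ⟨EC, EQ, hfac⟩
    -- the normalized rank-one density matrix attached to a nonzero vector
    set ρv : (Fin n → ℂ) → Matrix (Fin n) (Fin n) ℂ :=
      fun v => (star v ⬝ᵥ v)⁻¹ • Matrix.vecMulVec v (star v) with hρv
    have ht0 : ∀ v : Fin n → ℂ, v ≠ 0 → star v ⬝ᵥ v ≠ 0 := by
      intro v hv h
      exact hv (dotProduct_star_self_eq_zero.mp h)
    have htnn : ∀ v : Fin n → ℂ, 0 ≤ star v ⬝ᵥ v := fun v =>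
      Finset.sum_nonneg fun i _ => star_mul_self_nonneg (v i)
    have hρpsd : ∀ v : Fin n → ℂ, (ρv v).PosSemidef := by
      intro v
      refine aux_psd_smul (aux_outer_psd v) ?_
      obtain ⟨h1, h2⟩ := Complex.nonneg_iff.mp (htnn v)
      have he : star v ⬝ᵥ v = ((star v ⬝ᵥ v).re : ℂ) := Complex.ext rfl h2.symm
      rw [he, ← Complex.ofReal_inv]
      exact_mod_cast inv_nonneg.mpr h1
    have hρtr : ∀ v : Fin n → ℂ, v ≠ 0 → (ρv v).trace = 1 := by
      intro v hv
      rw [hρv, Matrix.trace_smul, aux_trace_outer_self, smul_eq_mul,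
        inv_mul_cancel₀ (ht0 v hv)]
    -- the quadratic form of M x factorizes
    have hq : ∀ (x : X) (v : Fin n → ℂ), v ≠ 0 →
        star v ⬝ᵥ (M x *ᵥ v) = (star v ⬝ᵥ v) * ((EC x * EQ (ρv v) : ℝ) : ℂ) := by
      intro x v hv
      have h := hfac x (ρv v) (hρpsd v) (hρtr v hv)
      have : (M x * ρv v).trace = (star v ⬝ᵥ v)⁻¹ * (star v ⬝ᵥ (M x *ᵥ v)) := by
        rw [hρv, Matrix.mul_smul, Matrix.trace_smul, aux_trace_outer, smul_eq_mul]
      rw [this] at h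
      rw [← h, ← mul_assoc, mul_inv_cancel₀ (ht0 v hv), one_mul]
    -- pairwise proportionality
    have pair : ∀ x y : X, ((EC y : ℂ)) • M x = ((EC x : ℂ)) • M y := by
      intro x y
      apply aux_quad_ext
      intro v
      by_cases hv : v = 0
      · subst hv; simp
      · rw [Matrix.smul_mulVec, Matrix.smul_mulVec,
          dotProduct_smul, dotProduct_smul, smul_eq_mul, smul_eq_mul,
          hq x v hv, hq y v hv]
        push_cast
        ring
    by_cases hall : ∀ x, M x = 0
    · refine ⟨fun _ => 0, 0, fun _ => le_refl 0, fun _ => zero_le_one,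
        Matrix.PosSemidef.zero, by simpa using Matrix.PosSemidef.one, fun x => by
          simp [hall x]⟩
    · push_neg at hall
      obtain ⟨x0, hx0⟩ := hall
      -- EC x0 ≠ 0
      have hEx0 : EC x0 ≠ 0 := by
        intro h0
        apply hx0
        apply aux_quad_ext (M x0) 0
        intro v
        by_cases hv : v = 0
        · subst hv; simp
        · rw [hq x0 v hv, h0]
          simp
      set g : X → ℝ := fun x => EC x / EC x0 with hg
      have hMg : ∀ x, M x = ((g x : ℝ) : ℂ) • M x0 := by
        intro x
        have h := pair x x0
        have : M x = ((EC x0 : ℂ))⁻¹ • (((EC x0 : ℂ)) • M x) := by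
          rw [smul_smul, inv_mul_cancel₀ (by exact_mod_cast hEx0), one_smul]
        rw [this, h, smul_smul, hg]
        push_cast
        rw [div_eq_inv_mul]
      -- g is nonnegative
      have hgnn : ∀ x, 0 ≤ g x := by
        intro x
        obtain ⟨v, hv⟩ : ∃ v : Fin n → ℂ, star v ⬝ᵥ (M x0 *ᵥ v) ≠ 0 := by
          by_contra hc
          push_neg at hc
          exact hx0 (aux_quad_ext (M x0) 0 fun v => by rw [hc v]; simp)
        have hcnn := (hM0 x0).dotProduct_mulVec_nonneg v
        have hcre : 0 < (star v ⬝ᵥ (M x0 *ᵥ v)).re := by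
          rcases Complex.nonneg_iff.mp hcnn with ⟨h1, h2⟩
          rcases lt_or_eq_of_le h1 with h | h
          · exact h
          · exact absurd (Complex.ext h.symm h2.symm) hv
        have hdnn := (hM0 x).dotProduct_mulVec_nonneg v
        have hd : (star v ⬝ᵥ (M x *ᵥ v)).re = g x * (star v ⬝ᵥ (M x0 *ᵥ v)).re := by
          rw [hMg x, Matrix.smul_mulVec, dotProduct_smul, smul_eq_mul,
            Complex.re_ofReal_mul]
        have := (Complex.nonneg_iff.mp hdnn).1
        rw [hd, mul_comm] at this
        exact nonneg_of_mul_nonneg_right this hcre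
      have hgx0 : g x0 = 1 := div_self hEx0
      obtain ⟨z, hz⟩ := Finite.exists_max g
      have hgz : 0 < g z := lt_of_lt_of_le one_pos (hgx0 ▸ hz x0)
      refine ⟨fun x => g x / g z, M z, fun x => div_nonneg (hgnn x) hgz.le,
        fun x => (div_le_one hgz).mpr (hz x), hM0 z, hM1 z, fun x => ?_⟩
      rw [hMg x, hMg z]
      rw [smul_smul]
      push_cast
      rw [div_mul_cancel₀]
      exact_mod_cast hgz.ne'
  · rintro ⟨f, Q, hf0, hf1, hQ, hQ1, hMQ⟩
    refine ⟨f, fun ρ => ((Q * ρ).trace).re, fun x ρ hρ hρ1 => ?_⟩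
    have htr : (M x * ρ).trace = (f x : ℂ) * (Q * ρ).trace := by
      rw [hMQ x, Matrix.smul_mul, Matrix.trace_smul, smul_eq_mul]
    obtain ⟨S, hS1, hS2⟩ := aux_sqrt hρ
    have hpsd : (S * (Q * S)).PosSemidef := by
      have := hQ.mul_mul_conjTranspose_same S
      rwa [hS1, Matrix.mul_assoc] at this
    have hQρ : (Q * ρ).trace = ((Q * ρ).trace.re : ℂ) := by
      have h3 : (Q * ρ).trace = (S * (Q * S)).trace := by
        conv_lhs => rw [← hS2]
        rw [← Matrix.mul_assoc, Matrix.trace_mul_comm]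
      have hre := aux_trace_nonneg hpsd
      rw [h3]
      exact Complex.ext (by simp) (by simp [← (Complex.nonneg_iff.mp hre).2])
    rw [htr, hQρ]
    push_cast
    simp
end

section
/- Let K be a nonempty finite set (the parties) and for each k ∈ K let d_k ≥ 1, let A_k (outcomes) and X_k (settings) be nonempty finite sets. For each k ∈ K, x ∈ X_k, a ∈ A_k let M_{k,a}^x be a positive semidefinite d_k×d_k complex matrix, and set M_{k,✓}^x := Σ_{a∈A_k} M_{k,a}^x, assuming M_{k,✓}^x ≼ 𝟙. Assume fair sampling: there exist reals e_k(x) > 0 and positive definite matrices Q_k with Q_k ≼ 𝟙 such that M_{k,✓}^x = e_k(x) • Q_k for all k ∈ K and x ∈ X_k. Let Ψ be a density matrix on the tensor-product space indexed by Π_{k∈K} Fin(d_k). Define the filtered state Ψ_✓ := (⊗_{k∈K} √Q_k) Ψ (⊗_{k∈K} √Q_k) / Tr((⊗_{k∈K} Q_k) Ψ), where √Q_k is the positive semidefinite square root (the denominator is strictly positive), and for each k, x, a define M̄_{k,a}^x := e_k(x)⁻¹ • (Q_k^{-1/2} M_{k,a}^x Q_k^{-1/2}). Then: (a) Σ_{a∈A_k}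 M̄_{k,a}^x = 𝟙 for every k and x, so each (M̄_{k,a}^x)_{a∈A_k} is a lossless POVM; and (b) for every tuple of settings x̄ ∈ Π_k X_k and every tuple of outcomes ā ∈ Π_k A_k, the post-selected probability equals the ideal probability: Tr((⊗_{k∈K} M_{k,ā(k)}^{x̄(k)}) Ψ) / Tr((⊗_{k∈K} M_{k,✓}^{x̄(k)}) Ψ) = Tr((⊗_{k∈K} M̄_{k,ā(k)}^{x̄(k)}) Ψ_✓). -/
/-!
Put `S_k = √Q_k` and `T = ⊗_k S_k`. The tensor product is multiplicative, so `T` is invertible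
with `T⁻¹ = ⊗_k S_k⁻¹` and `T * T = ⊗_k Q_k`. Hence `Tr((⊗_k Q_k) Ψ) = Tr(T Ψ T)` is positive,
`T Ψ T` being a nonzero positive semidefinite matrix. Each rescaled POVM sums to
`e⁻¹ • S⁻¹ (e • S S) S⁻¹ = 1`, and `⊗_k M̄_k = (∏_k e_k)⁻¹ • T⁻¹ (⊗_k M_k) T⁻¹`, so by cyclicity of
the trace both sides of the post-selection identity equal
`Tr((⊗_k M_k) Ψ) / ((∏_k e_k) Tr((⊗_k Q_k) Ψ))`.
-/

open scoped ComplexOrder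

/-- The positive semidefinite square root of a positive semidefinite matrix (as in the older Mathlib). -/
noncomputable def Matrix.PosSemidef.sqrt {n : Type*} [Fintype n] [DecidableEq n]
    {A : Matrix n n ℂ} (hA : A.PosSemidef) : Matrix n n ℂ :=
  hA.1.eigenvectorUnitary.1 * Matrix.diagonal ((↑) ∘ (Real.sqrt ·) ∘ hA.1.eigenvalues) *
    (star hA.1.eigenvectorUnitary : Matrix n n ℂ)

/-- The tensor product `⊗_{k∈K} A_k`, indexed by tuples in `Π_{k∈K} Fin (d k)`. -/
noncomputable def tensorProd {K : Type*} [Fintype K] {d : K → ℕ}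
    (A : ∀ k, Matrix (Fin (d k)) (Fin (d k)) ℂ) :
    Matrix (∀ k, Fin (d k)) (∀ k, Fin (d k)) ℂ :=
  fun f g => ∏ k, A k (f k) (g k)

open Matrix

namespace Matrix.PosSemidef

variable {n : Type*} [Fintype n] [DecidableEq n] {A : Matrix n n ℂ}

lemma posSemidef_sqrt (hA : A.PosSemidef) : hA.sqrt.PosSemidef := by
  have hD : (diagonal ((↑) ∘ (Real.sqrt ·) ∘ hA.1.eigenvalues : n → ℂ)).PosSemidef :=
    posSemidef_diagonal_iff.mpr fun i => by
      simp only [Function.comp_apply]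
      exact_mod_cast Real.sqrt_nonneg _
  simpa [PosSemidef.sqrt, star_eq_conjTranspose] using
    hD.mul_mul_conjTranspose_same hA.1.eigenvectorUnitary.1

lemma sqrt_mul_self (hA : A.PosSemidef) : hA.sqrt * hA.sqrt = A := by
  set U : Matrix n n ℂ := hA.1.eigenvectorUnitary.1
  have hU : star U * U = 1 := Unitary.star_mul_self_of_mem hA.1.eigenvectorUnitary.2
  have hDD : diagonal ((↑) ∘ (Real.sqrt ·) ∘ hA.1.eigenvalues : n → ℂ) *
      diagonal ((↑) ∘ (Real.sqrt ·) ∘ hA.1.eigenvalues : n → ℂ) =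
      diagonal (RCLike.ofReal ∘ hA.1.eigenvalues) := by
    rw [diagonal_mul_diagonal]
    congr 1
    funext i
    simp only [Function.comp_apply]
    rw [← Complex.ofReal_mul, Real.mul_self_sqrt (hA.eigenvalues_nonneg i)]
    rfl
  conv_rhs => rw [hA.1.spectral_theorem]
  simp only [PosSemidef.sqrt, Matrix.mul_assoc]
  rw [← Matrix.mul_assoc (star U) U, hU, Matrix.one_mul,
    ← Matrix.mul_assoc (diagonal _) (diagonal _), hDD]
  simp [Unitary.conjStarAlgAut_apply, Matrix.mul_assoc]

lemma isUnit_det_sqrt (hA : A.PosSemidef) (hdet : IsUnit A.det) : IsUnit hA.sqrt.det := by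
  rw [← hA.sqrt_mul_self, det_mul] at hdet
  exact (IsUnit.mul_iff.mp hdet).1

end Matrix.PosSemidef

section TensorProd

variable {K : Type*} [Fintype K] {d : K → ℕ}

lemma tensorProd_one : tensorProd (fun k => (1 : Matrix (Fin (d k)) (Fin (d k)) ℂ)) = 1 := by
  ext f g
  by_cases h : f = g
  · subst h
    simp [tensorProd]
  · obtain ⟨k, hk⟩ := Function.ne_iff.mp h
    rw [one_apply_ne h]
    exact Finset.prod_eq_zero (Finset.mem_univ k) (one_apply_ne hk)

lemma tensorProd_smul (c : K → ℂ) (A : ∀ k, Matrix (Fin (d k)) (Fin (d k)) ℂ) :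
    tensorProd (fun k => c k • A k) = (∏ k, c k) • tensorProd A := by
  ext f g
  simp [tensorProd, Finset.prod_mul_distrib]

lemma conjTranspose_tensorProd (A : ∀ k, Matrix (Fin (d k)) (Fin (d k)) ℂ) :
    (tensorProd A)ᴴ = tensorProd (fun k => (A k)ᴴ) := by
  ext f g
  simp [tensorProd, conjTranspose_apply]

variable [DecidableEq K]

lemma tensorProd_mul (A B : ∀ k, Matrix (Fin (d k)) (Fin (d k)) ℂ) :
    tensorProd A * tensorProd B = tensorProd (fun k => A k * B k) := by
  ext f g
  simp only [tensorProd, mul_apply, Finset.prod_univ_sum, Fintype.piFinset_univ,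
    ← Finset.prod_mul_distrib]

lemma tensorProd_nonsing_inv_mul_self (A : ∀ k, Matrix (Fin (d k)) (Fin (d k)) ℂ)
    (hA : ∀ k, IsUnit (A k).det) : tensorProd (fun k => (A k)⁻¹) * tensorProd A = 1 := by
  simp only [tensorProd_mul, nonsing_inv_mul _ (hA _), tensorProd_one]

lemma isUnit_det_tensorProd (A : ∀ k, Matrix (Fin (d k)) (Fin (d k)) ℂ)
    (hA : ∀ k, IsUnit (A k).det) : IsUnit (tensorProd A).det :=
  isUnit_det_of_left_inverse (tensorProd_nonsing_inv_mul_self A hA)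

lemma tensorProd_nonsing_inv (A : ∀ k, Matrix (Fin (d k)) (Fin (d k)) ℂ)
    (hA : ∀ k, IsUnit (A k).det) : tensorProd (fun k => (A k)⁻¹) = (tensorProd A)⁻¹ :=
  (inv_eq_left_inv (tensorProd_nonsing_inv_mul_self A hA)).symm

end TensorProd

lemma trace_conjTranspose_mul_self_mul_pos {n : Type*} [Fintype n] [DecidableEq n]
    {B Ψ : Matrix n n ℂ} (hB : IsUnit B) (hΨ : Ψ.PosSemidef) (hΨ0 : Ψ ≠ 0) :
    0 < (Bᴴ * B * Ψ).trace := by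
  have hconj : (B * Ψ * Bᴴ).PosSemidef := hΨ.mul_mul_conjTranspose_same B
  have hne : B * Ψ * Bᴴ ≠ 0 := by
    rwa [Ne, ← star_eq_conjTranspose, hB.star.mul_left_eq_zero, hB.mul_right_eq_zero]
  rw [← trace_mul_cycle]
  exact hconj.trace_nonneg.lt_of_ne' (mt hconj.trace_eq_zero_iff.mp hne)

lemma trace_nonsing_inv_conj_mul_conj {n R : Type*} [Fintype n] [DecidableEq n] [CommRing R]
    {T : Matrix n n R} (hT : IsUnit T.det) (N Ψ : Matrix n n R) :
    (T⁻¹ * N * T⁻¹ * (T * Ψ * T)).trace = (N * Ψ).trace := by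
  calc (T⁻¹ * N * T⁻¹ * (T * Ψ * T)).trace
      = (T⁻¹ * (N * (T⁻¹ * T) * Ψ) * T).trace := by simp only [Matrix.mul_assoc]
    _ = (T * T⁻¹ * (N * Ψ)).trace := by
      rw [nonsing_inv_mul _ hT, Matrix.mul_one, trace_mul_cycle, Matrix.mul_assoc]
    _ = (N * Ψ).trace := by rw [mul_nonsing_inv _ hT, Matrix.one_mul]

lemma sum_smul_nonsing_inv_conj_eq_one {ι n 𝕜 : Type*} [Fintype ι] [Fintype n] [DecidableEq n]
    [Field 𝕜] {M : ι → Matrix n n 𝕜} {e : 𝕜} (he : e ≠ 0) {S : Matrix n n 𝕜}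
    (hS : IsUnit S.det) (hsum : ∑ a, M a = e • (S * S)) :
    ∑ a, e⁻¹ • (S⁻¹ * M a * S⁻¹) = 1 := by
  rw [← Finset.smul_sum, ← Finset.sum_mul, ← Finset.mul_sum, hsum, Matrix.mul_smul,
    Matrix.smul_mul, ← Matrix.mul_assoc, nonsing_inv_mul _ hS, Matrix.one_mul,
    mul_nonsing_inv _ hS, smul_smul, inv_mul_cancel₀ he, one_smul]

theorem multipartite_fair_sampling_postselected_eq_lossless_on_filtered_state_general
    (K : Type*) [Fintype K] [DecidableEq K]
    (d : K → ℕ)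
    (A X : K → Type*) [∀ k, Fintype (A k)]
    [∀ k, Fintype (X k)]
    (M : ∀ k, X k → A k → Matrix (Fin (d k)) (Fin (d k)) ℂ)
    (e : ∀ k, X k → ℝ) (he : ∀ k x, 0 < e k x)
    (Q : ∀ k, Matrix (Fin (d k)) (Fin (d k)) ℂ)
    (hQ : ∀ k, (Q k).PosDef)
    (hfac : ∀ k x, ∑ a, M k x a = (e k x : ℂ) • Q k)
    (Ψ : Matrix (∀ k, Fin (d k)) (∀ k, Fin (d k)) ℂ)
    (hΨ : Ψ.PosSemidef) (hΨtr : Ψ.trace = 1) :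
    0 < (Matrix.trace (tensorProd Q * Ψ)).re ∧
    (∀ k x, ∑ a, (e k x : ℂ)⁻¹ •
        (((hQ k).posSemidef.sqrt)⁻¹ * M k x a * ((hQ k).posSemidef.sqrt)⁻¹) =
      (1 : Matrix (Fin (d k)) (Fin (d k)) ℂ)) ∧
    ∀ (xb : ∀ k, X k) (ab : ∀ k, A k),
      Matrix.trace (tensorProd (fun k => M k (xb k) (ab k)) * Ψ) /
          Matrix.trace (tensorProd (fun k => ∑ a, M k (xb k) a) * Ψ) =
        Matrix.trace
          (tensorProd (fun k => (e k (xb k) : ℂ)⁻¹ •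
              (((hQ k).posSemidef.sqrt)⁻¹ * M k (xb k) (ab k) * ((hQ k).posSemidef.sqrt)⁻¹)) *
            ((Matrix.trace (tensorProd Q * Ψ))⁻¹ •
              (tensorProd (fun k => (hQ k).posSemidef.sqrt) * Ψ *
                tensorProd (fun k => (hQ k).posSemidef.sqrt)))) := by
  set S := fun k => (hQ k).posSemidef.sqrt
  have hSS : ∀ k, S k * S k = Q k := fun k => (hQ k).posSemidef.sqrt_mul_self
  have hS : ∀ k, IsUnit (S k).det := fun k =>
    (hQ k).posSemidef.isUnit_det_sqrt ((isUnit_iff_isUnit_det _).mp (hQ k).isUnit)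
  set T := tensorProd S
  have hTT : T * T = tensorProd Q := by rw [tensorProd_mul]; simp only [hSS]
  have hTH : Tᴴ = T := by
    rw [conjTranspose_tensorProd]
    exact congrArg tensorProd (funext fun k => (hQ k).posSemidef.posSemidef_sqrt.1.eq)
  have hΨ0 : Ψ ≠ 0 := by rintro rfl; simp at hΨtr
  have hc : 0 < (tensorProd Q * Ψ).trace := by
    have h := trace_conjTranspose_mul_self_mul_pos (B := T)
      ((isUnit_iff_isUnit_det _).mpr (isUnit_det_tensorProd S hS)) hΨ hΨ0
    rwa [hTH, hTT] at h
  refine ⟨(Complex.pos_iff.mp hc).1, fun k x => sum_smul_nonsing_inv_conj_eq_one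
    (by exact_mod_cast (he k x).ne') (hS k) (by rw [hfac, hSS]), fun xb ab => ?_⟩
  have hden :
      tensorProd (fun k => ∑ a, M k (xb k) a) = (∏ k, (e k (xb k) : ℂ)) • tensorProd Q := by
    simp only [hfac, tensorProd_smul]
  have hconj : tensorProd (fun k => (S k)⁻¹ * M k (xb k) (ab k) * (S k)⁻¹) =
      T⁻¹ * tensorProd (fun k => M k (xb k) (ab k)) * T⁻¹ := by
    rw [← tensorProd_nonsing_inv S hS, tensorProd_mul, tensorProd_mul]
  rw [hden, tensorProd_smul, hconj, Matrix.smul_mul, Matrix.smul_mul, Matrix.mul_smul,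
    trace_smul, trace_smul, trace_smul,
    trace_nonsing_inv_conj_mul_conj (isUnit_det_tensorProd S hS),
    Finset.prod_inv_distrib, smul_eq_mul, smul_eq_mul, smul_eq_mul]
  field_simp

/-- Multipartite fair sampling. If each party's success element factorizes as
`M_{k,✓}^x = e_k(x) • Q_k` with `e_k(x) > 0` and `0 ≺ Q_k ≼ 𝟙`, then (the filtering probability
`Tr((⊗_k Q_k) Ψ)` is strictly positive,) the rescaled conjugated POVMs
`M̄_{k,a}^x = e_k(x)⁻¹ • (Q_k^{-1/2} M_{k,a}^x Q_k^{-1/2})` are lossless, and the post-selected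
statistics of the lossy devices on `Ψ` equal the statistics of the lossless devices on the
filtered state `Ψ_✓ = (⊗_k √Q_k) Ψ (⊗_k √Q_k) / Tr((⊗_k Q_k) Ψ)`. -/
theorem multipartite_fair_sampling_postselected_eq_lossless_on_filtered_state
    (K : Type*) [Fintype K] [DecidableEq K] [Nonempty K]
    (d : K → ℕ) (hd : ∀ k, 1 ≤ d k)
    (A X : K → Type*) [∀ k, Fintype (A k)] [∀ k, Nonempty (A k)]
    [∀ k, Fintype (X k)] [∀ k, Nonempty (X k)]
    (M : ∀ k, X k → A k → Matrix (Fin (d k)) (Fin (d k)) ℂ)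
    (hMpsd : ∀ k x a, (M k x a).PosSemidef)
    (hMle : ∀ k x, ((1 : Matrix (Fin (d k)) (Fin (d k)) ℂ) - ∑ a, M k x a).PosSemidef)
    (e : ∀ k, X k → ℝ) (he : ∀ k x, 0 < e k x)
    (Q : ∀ k, Matrix (Fin (d k)) (Fin (d k)) ℂ)
    (hQ : ∀ k, (Q k).PosDef)
    (hQle : ∀ k, ((1 : Matrix (Fin (d k)) (Fin (d k)) ℂ) - Q k).PosSemidef)
    (hfac : ∀ k x, ∑ a, M k x a = (e k x : ℂ) • Q k)
    (Ψ : Matrix (∀ k, Fin (d k)) (∀ k, Fin (d k)) ℂ)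
    (hΨ : Ψ.PosSemidef) (hΨtr : Ψ.trace = 1) :
    0 < (Matrix.trace (tensorProd Q * Ψ)).re ∧
    (∀ k x, ∑ a, (e k x : ℂ)⁻¹ •
        (((hQ k).posSemidef.sqrt)⁻¹ * M k x a * ((hQ k).posSemidef.sqrt)⁻¹) =
      (1 : Matrix (Fin (d k)) (Fin (d k)) ℂ)) ∧
    ∀ (xb : ∀ k, X k) (ab : ∀ k, A k),
      Matrix.trace (tensorProd (fun k => M k (xb k) (ab k)) * Ψ) /
          Matrix.trace (tensorProd (fun k => ∑ a, M k (xb k) a) * Ψ) =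
        Matrix.trace
          (tensorProd (fun k => (e k (xb k) : ℂ)⁻¹ •
              (((hQ k).posSemidef.sqrt)⁻¹ * M k (xb k) (ab k) * ((hQ k).posSemidef.sqrt)⁻¹)) *
            ((Matrix.trace (tensorProd Q * Ψ))⁻¹ •
              (tensorProd (fun k => (hQ k).posSemidef.sqrt) * Ψ *
                tensorProd (fun k => (hQ k).posSemidef.sqrt)))) :=
  multipartite_fair_sampling_postselected_eq_lossless_on_filtered_state_general K d A X M e he Q hQ
    hfac Ψ hΨ hΨtr
end

section
/- Let n ≥ 1, let ρ̂ be a density matrix on ℂⁿ and let Π be an orthogonal projection (a Hermitian idempotent n×n matrix). Set ε' := Tr((𝟙 − Π) ρ̂), assume ε' < 1, and define ρ := Π ρ̂ Π / (1 − ε') and c := Π ρ̂ (𝟙 − Π). Then the trace-norm distance satisfies ‖ ρ̂ − ρ ‖_Tr ≤ 2·‖c‖_Tr + 2·ε'. -/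
open scoped ComplexOrder

/-- The trace norm `‖c‖_Tr = Tr √(c cᴴ)` of a complex square matrix. -/
noncomputable def traceNorm {m : Type*} [Fintype m] [DecidableEq m]
    (c : Matrix m m ℂ) : ℝ :=
  (((Matrix.posSemidef_self_mul_conjTranspose c).1.eigenvectorUnitary.1 *
      Matrix.diagonal (((↑) : ℝ → ℂ) ∘ (√·) ∘ (Matrix.posSemidef_self_mul_conjTranspose c).1.eigenvalues) *
      (star (Matrix.posSemidef_self_mul_conjTranspose c).1.eigenvectorUnitary : Matrix m m ℂ)).trace).re

/-!
With `Q = 1 - P`, `ε = Tr (Q ρ̂)` and `c = P ρ̂ Q`, expanding `ρ̂ = (P + Q) ρ̂ (P + Q)` gives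
`ρ̂ - ρ = (c + cᴴ) + Q ρ̂ Q - ε / (1 - ε) • P ρ̂ P`. The two compressions are positive semidefinite
with traces `ε` and `1 - ε`, so the triangle inequality bounds the trace norm by
`‖c‖ + ‖cᴴ‖ + ε + ε = 2 ‖c‖ + 2 ε`.

The triangle inequality is the real work. For Hermitian `Z = X + Y` let `S` be the sign of `Z`,
so `S² = 1` and `S Z = |Z|`; since `1 ∓ S ≥ 0`, `Re Tr (S X) ≤ Tr X⁺ + Tr X⁻ = Tr |X|`, and likewise
for `Y`. A general `A` is reduced to this case through its Hermitian dilation `[[0, A], [Aᴴ, 0]]`,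
whose trace norm is `‖Aᴴ‖ + ‖A‖ = 2 ‖A‖`, because `A Aᴴ` and `Aᴴ A` have the same characteristic
polynomial and hence the same eigenvalues.
-/

open Matrix
open scoped MatrixOrder

lemma Matrix.trace_fromBlocks {m n R : Type*} [Fintype m] [Fintype n] [AddCommMonoid R]
    (A : Matrix m m R) (B : Matrix m n R) (C : Matrix n m R) (D : Matrix n n R) :
    (fromBlocks A B C D).trace = A.trace + D.trace := by
  simp [trace, Fintype.sum_sum_type]

def hermitianDilation {m n : Type*} (A : Matrix m n ℂ) : Matrix (m ⊕ n) (m ⊕ n) ℂ :=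
  fromBlocks 0 A Aᴴ 0

lemma isHermitian_hermitianDilation {m n : Type*} (A : Matrix m n ℂ) :
    (hermitianDilation A).IsHermitian := by
  rw [hermitianDilation, IsHermitian, fromBlocks_conjTranspose]
  simp

lemma hermitianDilation_add {m n : Type*} (A B : Matrix m n ℂ) :
    hermitianDilation (A + B) = hermitianDilation A + hermitianDilation B := by
  simp [hermitianDilation, fromBlocks_add]

section

variable {m : Type*} [Fintype m] [DecidableEq m]

lemma traceNorm_eq_sum_sqrt_eigenvalues (c : Matrix m m ℂ) :
    traceNorm c = ∑ i, √((posSemidef_self_mul_conjTranspose c).1.eigenvalues i) := by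
  rw [traceNorm, trace_mul_cycle, Unitary.coe_star_mul_self, one_mul, trace_diagonal,
    Complex.re_sum]
  rfl

lemma traceNorm_conjTranspose (c : Matrix m m ℂ) : traceNorm cᴴ = traceNorm c := by
  have h := ((posSemidef_self_mul_conjTranspose cᴴ).1.eigenvalues_eq_eigenvalues_iff
    (posSemidef_self_mul_conjTranspose c).1).2
    (by rw [conjTranspose_conjTranspose, charpoly_mul_comm])
  rw [traceNorm_eq_sum_sqrt_eigenvalues, traceNorm_eq_sum_sqrt_eigenvalues, h]

lemma traceNorm_eq_re_trace_abs_conjTranspose (c : Matrix m m ℂ) :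
    traceNorm c = (CFC.abs cᴴ).trace.re := by
  rw [CFC.abs, star_eq_conjTranspose, conjTranspose_conjTranspose,
    CFC.sqrt_eq_real_sqrt _ (posSemidef_self_mul_conjTranspose c).nonneg,
    cfcₙ_eq_cfc (hf0 := Real.sqrt_zero), (posSemidef_self_mul_conjTranspose c).1.cfc_eq,
    IsHermitian.cfc, Unitary.conjStarAlgAut_apply]
  rfl

lemma traceNorm_eq_re_trace_abs (c : Matrix m m ℂ) : traceNorm c = (CFC.abs c).trace.re := by
  rw [← traceNorm_conjTranspose, traceNorm_eq_re_trace_abs_conjTranspose,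
    conjTranspose_conjTranspose]

lemma traceNorm_nonneg (c : Matrix m m ℂ) : 0 ≤ traceNorm c := by
  rw [traceNorm_eq_re_trace_abs]
  exact (Complex.nonneg_iff.mp (CFC.abs_nonneg c).posSemidef.trace_nonneg).1

lemma traceNorm_smul (r : ℝ) (c : Matrix m m ℂ) : traceNorm (r • c) = |r| * traceNorm c := by
  rw [traceNorm_eq_re_trace_abs, traceNorm_eq_re_trace_abs, CFC.abs_smul, trace_smul,
    Real.norm_eq_abs, Complex.smul_re, smul_eq_mul]

lemma Matrix.PosSemidef.traceNorm_eq {A : Matrix m m ℂ} (hA : A.PosSemidef) :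
    traceNorm A = A.trace.re := by
  rw [traceNorm_eq_re_trace_abs, CFC.abs_of_nonneg A hA.nonneg]

lemma Matrix.IsHermitian.exists_involution_mul_eq_abs {Z : Matrix m m ℂ} (hZ : Z.IsHermitian) :
    ∃ S : Matrix m m ℂ, S.IsHermitian ∧ S * S = 1 ∧ S * Z = CFC.abs Z := by
  let sgn : ℝ → ℝ := fun x => if 0 ≤ x then 1 else -1
  have hcont : ContinuousOn sgn (spectrum ℝ Z) := Z.finite_real_spectrum.continuousOn _
  refine ⟨cfc sgn Z, cfc_predicate sgn Z, ?_, ?_⟩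
  · rw [← cfc_mul .., ← cfc_one ℝ Z]
    exact cfc_congr fun x _ => by simp only [sgn, Pi.one_apply]; split_ifs <;> norm_num
  · rw [CFC.abs_eq_cfc_norm Z hZ.isSelfAdjoint]
    nth_rw 2 [← cfc_id' ℝ Z]
    rw [← cfc_mul ..]
    refine cfc_congr fun x _ => ?_
    simp only [sgn, Real.norm_eq_abs]
    split_ifs with h
    · simp [abs_of_nonneg h]
    · simp [abs_of_neg (not_le.mp h)]

lemma re_trace_mul_le_of_mul_self_eq_one {S M : Matrix m m ℂ} (hS : S.IsHermitian)
    (hSS : S * S = 1) (hM : M.PosSemidef) : (S * M).trace.re ≤ M.trace.re := by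
  have hpsd : ((1 - S) * M * (1 - S)ᴴ).PosSemidef := hM.mul_mul_conjTranspose_same _
  have hsq : (1 - S)ᴴ * (1 - S) = (1 - S) + (1 - S) := by
    rw [conjTranspose_sub, conjTranspose_one, hS.eq, sub_mul, mul_sub, mul_sub, hSS]
    simp only [mul_one, one_mul]
    abel
  have h := (Complex.le_def.mp hpsd.trace_nonneg).1
  rw [trace_mul_cycle, hsq, add_mul, sub_mul, one_mul, trace_add, trace_sub] at h
  simp only [Complex.zero_re, Complex.add_re, Complex.sub_re] at h
  linarith

lemma re_trace_mul_le_traceNorm_of_mul_self_eq_one {S X : Matrix m m ℂ} (hS : S.IsHermitian)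
    (hSS : S * S = 1) (hX : X.IsHermitian) : (S * X).trace.re ≤ traceNorm X := by
  have hpos := re_trace_mul_le_of_mul_self_eq_one hS hSS (CFC.posPart_nonneg X).posSemidef
  have hneg := re_trace_mul_le_of_mul_self_eq_one hS.neg (by rw [neg_mul_neg, hSS])
    (CFC.negPart_nonneg X).posSemidef
  rw [neg_mul, trace_neg, Complex.neg_re] at hneg
  rw [traceNorm_eq_re_trace_abs, ← CFC.posPart_add_negPart X, trace_add, Complex.add_re]
  nth_rw 1 [← CFC.posPart_sub_negPart X]
  rw [mul_sub, trace_sub, Complex.sub_re]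
  linarith

lemma Matrix.IsHermitian.traceNorm_add_le {X Y : Matrix m m ℂ} (hX : X.IsHermitian)
    (hY : Y.IsHermitian) : traceNorm (X + Y) ≤ traceNorm X + traceNorm Y := by
  obtain ⟨S, hS, hSS, hSabs⟩ := (hX.add hY).exists_involution_mul_eq_abs
  calc traceNorm (X + Y) = (S * (X + Y)).trace.re := by rw [hSabs, traceNorm_eq_re_trace_abs]
    _ = (S * X).trace.re + (S * Y).trace.re := by rw [mul_add, trace_add, Complex.add_re]
    _ ≤ traceNorm X + traceNorm Y := add_le_add
        (re_trace_mul_le_traceNorm_of_mul_self_eq_one hS hSS hX)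
        (re_trace_mul_le_traceNorm_of_mul_self_eq_one hS hSS hY)

lemma Matrix.PosSemidef.fromBlocks_zero_zero {n : Type*} [Fintype n] [DecidableEq n]
    {A : Matrix m m ℂ} {D : Matrix n n ℂ} (hA : A.PosSemidef) (hD : D.PosSemidef) :
    (fromBlocks A 0 0 D).PosSemidef := by
  have hsqrt : fromBlocks A 0 0 D =
      (fromBlocks (CFC.sqrt A) 0 0 (CFC.sqrt D))ᴴ * fromBlocks (CFC.sqrt A) 0 0 (CFC.sqrt D) := by
    rw [fromBlocks_conjTranspose, fromBlocks_multiply, ← star_eq_conjTranspose,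
      ← star_eq_conjTranspose, (CFC.sqrt_nonneg A).star_eq, (CFC.sqrt_nonneg D).star_eq,
      CFC.sqrt_mul_sqrt_self A hA.nonneg, CFC.sqrt_mul_sqrt_self D hD.nonneg]
    simp
  rw [hsqrt]
  exact posSemidef_conjTranspose_mul_self _

lemma abs_hermitianDilation (A : Matrix m m ℂ) :
    CFC.abs (hermitianDilation A) = fromBlocks (CFC.abs Aᴴ) 0 0 (CFC.abs A) := by
  refine CFC.sqrt_unique ?_ (PosSemidef.fromBlocks_zero_zero
    (CFC.abs_nonneg _).posSemidef (CFC.abs_nonneg _).posSemidef).nonneg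
  rw [fromBlocks_multiply, CFC.abs_mul_abs, CFC.abs_mul_abs,
    (isHermitian_hermitianDilation A).isSelfAdjoint.star_eq, hermitianDilation, fromBlocks_multiply]
  simp [star_eq_conjTranspose]

lemma traceNorm_hermitianDilation (A : Matrix m m ℂ) :
    traceNorm (hermitianDilation A) = 2 * traceNorm A := by
  rw [traceNorm_eq_re_trace_abs, abs_hermitianDilation, trace_fromBlocks, Complex.add_re,
    ← traceNorm_eq_re_trace_abs, ← traceNorm_eq_re_trace_abs, traceNorm_conjTranspose, two_mul]

lemma traceNorm_add_le (A B : Matrix m m ℂ) : traceNorm (A + B) ≤ traceNorm A + traceNorm B := by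
  have h := (isHermitian_hermitianDilation A).traceNorm_add_le (isHermitian_hermitianDilation B)
  rw [← hermitianDilation_add, traceNorm_hermitianDilation, traceNorm_hermitianDilation,
    traceNorm_hermitianDilation] at h
  linarith

lemma traceNorm_mul_mul_self_eq_re_trace_mul {P ρ : Matrix m m ℂ} (hρ : ρ.PosSemidef)
    (hP : P.IsHermitian) (hP2 : P * P = P) : traceNorm (P * ρ * P) = (P * ρ).trace.re := by
  have h := hρ.mul_mul_conjTranspose_same P
  rw [hP.eq] at h
  rw [h.traceNorm_eq, trace_mul_cycle, hP2]

lemma Matrix.IsHermitian.eq_block_decomposition {ρ P : Matrix m m ℂ} (hρ : ρ.IsHermitian)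
    (hP : P.IsHermitian) : ρ = P * ρ * P + (P * ρ * (1 - P) + (P * ρ * (1 - P))ᴴ) +
      (1 - P) * ρ * (1 - P) := by
  rw [conjTranspose_mul, conjTranspose_mul, (isHermitian_one.sub hP).eq, hP.eq, hρ.eq]
  noncomm_ring

end

theorem traceNorm_dist_renormalized_le_general
    (n : ℕ)
    (ρhat : Matrix (Fin n) (Fin n) ℂ) (hρ : ρhat.PosSemidef) (hρtr : ρhat.trace = 1)
    (P : Matrix (Fin n) (Fin n) ℂ) (hP : P.IsHermitian) (hP2 : P * P = P)
    (hε : (Matrix.trace ((1 - P) * ρhat)).re < 1) :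
    traceNorm (ρhat - (1 - (Matrix.trace ((1 - P) * ρhat)).re)⁻¹ • (P * ρhat * P)) ≤
      2 * traceNorm (P * ρhat * (1 - P)) + 2 * (Matrix.trace ((1 - P) * ρhat)).re := by
  set Q := 1 - P with hQ_def
  set ε := (Q * ρhat).trace.re
  have hQ : Q.IsHermitian := isHermitian_one.sub hP
  have hQ2 : Q * Q = Q := by rw [hQ_def, sub_mul, mul_sub, mul_sub, hP2]; simp
  have hQρQ : traceNorm (Q * ρhat * Q) = ε := traceNorm_mul_mul_self_eq_re_trace_mul hρ hQ hQ2
  have hPρP : traceNorm (P * ρhat * P) = 1 - ε := by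
    rw [traceNorm_mul_mul_self_eq_re_trace_mul hρ hP hP2, show P = 1 - Q by simp [hQ_def],
      sub_mul, one_mul, trace_sub, hρtr, Complex.sub_re, Complex.one_re]
  have hε0 : 0 ≤ ε := hQρQ ▸ traceNorm_nonneg _
  have hε1 : 1 - ε ≠ 0 := by linarith
  have hdecomp : ρhat - (1 - ε)⁻¹ • (P * ρhat * P) = (P * ρhat * Q + (P * ρhat * Q)ᴴ) +
      Q * ρhat * Q + (-(ε / (1 - ε))) • (P * ρhat * P) := by
    have hk : (1 - ε)⁻¹ = 1 + ε / (1 - ε) := by field_simp; ring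
    rw [hk, add_smul, one_smul, neg_smul]
    nth_rw 1 [hρ.1.eq_block_decomposition hP]
    abel
  calc traceNorm (ρhat - (1 - ε)⁻¹ • (P * ρhat * P))
      ≤ (traceNorm (P * ρhat * Q) + traceNorm (P * ρhat * Q)ᴴ) + traceNorm (Q * ρhat * Q) +
          traceNorm ((-(ε / (1 - ε))) • (P * ρhat * P)) := by
        rw [hdecomp]
        grw [traceNorm_add_le, traceNorm_add_le, traceNorm_add_le]
    _ = 2 * traceNorm (P * ρhat * Q) + 2 * ε := by
        rw [traceNorm_conjTranspose, hQρQ, traceNorm_smul, hPρP, abs_neg,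
          abs_of_nonneg (div_nonneg hε0 (by linarith)), div_mul_cancel₀ _ hε1]
        ring

/-- For a density matrix `ρ̂` and an orthogonal projection `P`, with
`ε' := Tr((𝟙 − P) ρ̂) < 1`, `ρ := P ρ̂ P / (1 − ε')` and `c := P ρ̂ (𝟙 − P)`, one has
`‖ρ̂ − ρ‖_Tr ≤ 2‖c‖_Tr + 2ε'`. -/
theorem traceNorm_dist_renormalized_le
    (n : ℕ) (hn : 1 ≤ n)
    (ρhat : Matrix (Fin n) (Fin n) ℂ) (hρ : ρhat.PosSemidef) (hρtr : ρhat.trace = 1)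
    (P : Matrix (Fin n) (Fin n) ℂ) (hP : P.IsHermitian) (hP2 : P * P = P)
    (hε : (Matrix.trace ((1 - P) * ρhat)).re < 1) :
    traceNorm (ρhat - (1 - (Matrix.trace ((1 - P) * ρhat)).re)⁻¹ • (P * ρhat * P)) ≤
      2 * traceNorm (P * ρhat * (1 - P)) + 2 * (Matrix.trace ((1 - P) * ρhat)).re :=
  traceNorm_dist_renormalized_le_general n ρhat hρ hρtr P hP hP2 hε
end

section
/- Let R₁, R₂ be real numbers with 0 ≤ R₂ ≤ R₁ < 1 and let n ≥ 1 be an integer. Then (R₁ⁿ − R₂ⁿ)/(1 − R₂ⁿ) ≤ (R₁ − R₂)/(1 − R₂). In particular, the maximum over n ≥ 1 of (R₁ⁿ − R₂ⁿ)/(1 − R₂ⁿ) is attained at n = 1 and equals (R₁ − R₂)/(1 − R₂). -/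
/-- For `0 ≤ R₂ ≤ R₁ < 1`, the quantity `(R₁ⁿ − R₂ⁿ)/(1 − R₂ⁿ)` is at most
`(R₁ − R₂)/(1 − R₂)` for every `n ≥ 1`; in particular its maximum over `n ≥ 1` is attained at
`n = 1` and equals `(R₁ − R₂)/(1 − R₂)`. -/
theorem photon_sector_deviation_max_at_one
    (R₁ R₂ : ℝ) (h0 : 0 ≤ R₂) (h21 : R₂ ≤ R₁) (h1 : R₁ < 1) :
    (∀ n : ℕ, 1 ≤ n → (R₁ ^ n - R₂ ^ n) / (1 - R₂ ^ n) ≤ (R₁ - R₂) / (1 - R₂)) ∧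
    IsGreatest {y : ℝ | ∃ n : ℕ, 1 ≤ n ∧ y = (R₁ ^ n - R₂ ^ n) / (1 - R₂ ^ n)}
      ((R₁ - R₂) / (1 - R₂)) := by
  have h01 : 0 ≤ R₁ := le_trans h0 h21
  have h2lt : R₂ < 1 := lt_of_le_of_lt h21 h1
  have key : ∀ n : ℕ, (R₁ ^ n - R₂ ^ n) * (1 - R₂) ≤ (R₁ - R₂) * (1 - R₂ ^ n) := by
    intro n
    induction n with
    | zero => simp
    | succ n ih =>
      have hA1 : R₁ ^ n ≤ 1 := pow_le_one₀ h01 h1.le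
      have hBA : R₂ ^ n ≤ R₁ ^ n := pow_le_pow_left₀ h0 h21 n
      have hB0 : 0 ≤ R₂ ^ n := pow_nonneg h0 n
      rw [pow_succ, pow_succ]
      nlinarith [mul_nonneg hB0 (sub_nonneg.mpr h21), mul_nonneg (sub_nonneg.mpr hBA) (sub_nonneg.mpr h2lt.le)]
  have main : ∀ n : ℕ, 1 ≤ n → (R₁ ^ n - R₂ ^ n) / (1 - R₂ ^ n) ≤ (R₁ - R₂) / (1 - R₂) := by
    intro n hn
    have hdn : 0 < 1 - R₂ ^ n := by
      have : R₂ ^ n < 1 := pow_lt_one₀ h0 h2lt (Nat.one_le_iff_ne_zero.mp hn)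
      linarith
    have hd1 : 0 < 1 - R₂ := by linarith
    rw [div_le_div_iff₀ hdn hd1]
    exact key n
  refine ⟨main, ⟨⟨1, le_refl 1, by rw [pow_one, pow_one]⟩, ?_⟩⟩
  rintro y ⟨n, hn, rfl⟩
  exact main n hn
end
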